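/- The pair (H,G), with G acting on H by g·h = h∘g⁻¹, is small: for every n < ω there are only countably many orbits on Hⁿ under the diagonal action of G; equivalently, for every finite subset A ⊆ H there are only countably many orbits on H under the pointwise stabilizer G_A. -/

import Mathlib

open scoped ENNReal

/-- The weight of a point `(i,j) ∈ ℕ × ℕ`: `2 · 3^{-(i+1)}`. -/
noncomputable def wt (p : ℕ × ℕ) : ℝ≥0∞ := 2 * ((3 : ℝ≥0∞) ^ (p.1 + 1))⁻¹

/-- `‖S‖ = Σ_{(i,j) ∈ S} 2 · 3^{-(i+1)} ∈ [0,∞]` for `S ⊆ ℕ × ℕ`. -/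
noncomputable def nrmS (S : Set (ℕ × ℕ)) : ℝ≥0∞ := ∑' p, S.indicator wt p

lemma nrmS_mono {S T : Set (ℕ × ℕ)} (h : S ⊆ T) : nrmS S ≤ nrmS T :=
  ENNReal.tsum_le_tsum fun p =>
    Set.indicator_le_indicator_of_subset h (fun _ => zero_le) p

lemma nrmS_union_le (S T : Set (ℕ × ℕ)) : nrmS (S ∪ T) ≤ nrmS S + nrmS T := by
  rw [nrmS, nrmS, nrmS, ← ENNReal.tsum_add]
  refine ENNReal.tsum_le_tsum fun p => ?_
  by_cases hS : p ∈ S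
  · refine le_trans ?_ (le_add_right le_rfl)
    rw [Set.indicator_of_mem (Set.mem_union_left _ hS), Set.indicator_of_mem hS]
  · by_cases hT : p ∈ T
    · refine le_trans ?_ (le_add_left le_rfl)
      rw [Set.indicator_of_mem (Set.mem_union_right _ hT), Set.indicator_of_mem hT]
    · rw [Set.indicator_of_notMem (fun hc => hc.elim hS hT)]
      exact zero_le

lemma nrmS_empty : nrmS ∅ = 0 := by simp [nrmS]

/-- The support of `z : ℕ × ℕ → ZMod 2`. -/
def suppZ (z : ℕ × ℕ → ZMod 2) : Set (ℕ × ℕ) := {p | z p = 1}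

/-- `‖z‖` for `z : ℕ × ℕ → ZMod 2`. -/
noncomputable def nrmZ (z : ℕ × ℕ → ZMod 2) : ℝ≥0∞ := nrmS (suppZ z)

/-- `H = {z : ℕ × ℕ → ZMod 2 | ‖z‖ < ∞}`, as an (additive) subgroup of the product group
`ℕ × ℕ → ZMod 2` with pointwise addition mod 2. -/
noncomputable def Hgrp : AddSubgroup ((ℕ × ℕ) → ZMod 2) where
  carrier := {z | nrmZ z < ⊤}
  zero_mem' := by
    have h : suppZ 0 = ∅ := by ext p; simp [suppZ]
    simp [nrmZ, h, nrmS_empty]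
  add_mem' {z w} hz hw := by
    have hsub : suppZ (z + w) ⊆ suppZ z ∪ suppZ w := by
      intro p hp
      by_contra hc
      simp only [Set.mem_union, suppZ, Set.mem_setOf_eq, not_or] at hc
      have hdi : ∀ x : ZMod 2, x = 0 ∨ x = 1 := by decide
      have hz0 : z p = 0 := (hdi (z p)).resolve_right hc.1
      have hw0 : w p = 0 := (hdi (w p)).resolve_right hc.2
      have hp' : (z + w) p = 1 := hp
      rw [Pi.add_apply, hz0, hw0] at hp'
      exact absurd hp' (by decide)
    calc nrmZ (z + w) ≤ nrmS (suppZ z ∪ suppZ w) := nrmS_mono hsub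
      _ ≤ nrmZ z + nrmZ w := nrmS_union_le _ _
      _ < ⊤ := ENNReal.add_lt_top.2 ⟨hz, hw⟩
  neg_mem' {z} hz := by
    have h : suppZ (-z) = suppZ z := by
      ext p; simp [suppZ, CharTwo.neg_eq]
    simpa [nrmZ, h] using hz
/-- `φ(x) = Σ_i 2 · x i · 3^{-(i+1)}`, the standard map from `2^ℕ` onto the ternary Cantor
set (values of `x` read as `0, 1` in `ℝ`). -/
noncomputable def phiC (x : ℕ → ZMod 2) : ℝ :=
  ∑' i, 2 * ((x i).val : ℝ) * ((3 : ℝ) ^ (i + 1))⁻¹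

/-- The metric on `H`: `d_H(z,w) = Σ_j |φ(z(·,j)) − φ(w(·,j))|`, the `ℓ¹`-distance between
the corresponding points of `C^ℕ ∩ ℓ¹`. -/
noncomputable def dH (z w : ↥Hgrp) : ℝ :=
  ∑' j, |phiC (fun i => (z : (ℕ × ℕ) → ZMod 2) (i, j)) -
          phiC (fun i => (w : (ℕ × ℕ) → ZMod 2) (i, j))|

/-- The support of a permutation `g` of `ℕ × ℕ`. -/
def suppP (g : Equiv.Perm (ℕ × ℕ)) : Set (ℕ × ℕ) := {p | g p ≠ p}

lemma suppP_inv (g : Equiv.Perm (ℕ × ℕ)) : suppP g⁻¹ = suppP g := by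
  ext p
  simp only [suppP, Set.mem_setOf_eq, ne_eq]
  constructor
  · intro h hc
    exact h (by conv_lhs => rw [← hc]; rw [← Equiv.Perm.mul_apply, inv_mul_cancel, Equiv.Perm.one_apply] ; )
  · intro h hc
    exact h (by conv_lhs => rw [← hc]; rw [← Equiv.Perm.mul_apply, mul_inv_cancel, Equiv.Perm.one_apply])

/-- `G = {g ∈ Sym(ℕ × ℕ) | ‖supp g‖ < ∞}`, as a subgroup of the symmetric group of
`ℕ × ℕ`. -/
noncomputable def Ggrp : Subgroup (Equiv.Perm (ℕ × ℕ)) where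
  carrier := {g | nrmS (suppP g) < ⊤}
  one_mem' := by
    have h : suppP 1 = ∅ := by ext p; simp [suppP]
    simp [h, nrmS_empty]
  mul_mem' {f g} hf hg := by
    have hsub : suppP (f * g) ⊆ suppP f ∪ suppP g := by
      intro p hp
      by_contra hc
      simp only [Set.mem_union, suppP, Set.mem_setOf_eq, ne_eq, not_or, not_not] at hc
      exact hp (by simp only [suppP, Set.mem_setOf_eq, Equiv.Perm.mul_apply, hc.2, hc.1] at *)
    calc nrmS (suppP (f * g)) ≤ nrmS (suppP f ∪ suppP g) := nrmS_mono hsub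
      _ ≤ nrmS (suppP f) + nrmS (suppP g) := nrmS_union_le _ _
      _ < ⊤ := ENNReal.add_lt_top.2 ⟨hf, hg⟩
  inv_mem' {g} hg := by simpa [suppP_inv] using hg

/-- The metric on `G`: `d(f,g) = ‖supp (f⁻¹ ∘ g)‖`. -/
noncomputable def dG (f g : ↥Ggrp) : ℝ :=
  (nrmS (suppP ((f : Equiv.Perm (ℕ × ℕ))⁻¹ * (g : Equiv.Perm (ℕ × ℕ))))).toReal

/-- The action of `G` on `H`: `g • h = h ∘ g⁻¹`. -/
noncomputable def actGH (g : ↥Ggrp) (h : ↥Hgrp) : ↥Hgrp :=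
  ⟨fun p => (h : (ℕ × ℕ) → ZMod 2) (((g : Equiv.Perm (ℕ × ℕ)))⁻¹ p), by
    have hsub : suppZ (fun p => (h : (ℕ × ℕ) → ZMod 2) (((g : Equiv.Perm (ℕ × ℕ)))⁻¹ p)) ⊆
        suppZ (h : (ℕ × ℕ) → ZMod 2) ∪ suppP (g : Equiv.Perm (ℕ × ℕ)) := by
      intro p hp
      by_cases hgp : ((g : Equiv.Perm (ℕ × ℕ)))⁻¹ p = p
      · left
        have : (h : (ℕ × ℕ) → ZMod 2) (((g : Equiv.Perm (ℕ × ℕ)))⁻¹ p) = 1 := hp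
        rwa [hgp] at this
      · right
        have : p ∈ suppP ((g : Equiv.Perm (ℕ × ℕ)))⁻¹ := hgp
        rwa [suppP_inv] at this
    show nrmZ _ < ⊤
    calc nrmZ _ ≤ nrmS (suppZ (h : (ℕ × ℕ) → ZMod 2) ∪ suppP (g : Equiv.Perm (ℕ × ℕ))) :=
          nrmS_mono hsub
      _ ≤ nrmZ (h : (ℕ × ℕ) → ZMod 2) + nrmS (suppP (g : Equiv.Perm (ℕ × ℕ))) :=
          nrmS_union_le _ _
      _ < ⊤ := ENNReal.add_lt_top.2 ⟨h.2, g.2⟩⟩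

/-!
The orbit of a finite tuple `v` of elements of `H` under `G` is determined by a countable
invariant: for each pattern `s`, the number (in `ℕ∞`) of points at which `v` takes the values `s`.
Given two tuples with the same invariant, let `W` be the union of their supports and of an
infinite set `D` of finite norm disjoint from both; `D` can meet each row `{i} × ℕ` once, because
the rows of a set of finite norm are finite. Inside `W` the fibres of the two pattern maps are
equinumerous (the zero fibre is countably infinite on both sides), so a bijection of `W` matching
them, extended by the identity, is an element of `G` carrying one tuple to the other.
-/

open Set Function Cardinal

lemma countable_setOf_exists_eq_of_factorsThrough {X Y C : Type*} [Countable C] {f : X → Y}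
    {c : X → C} (h : f.FactorsThrough c) : Countable {y | ∃ x, y = f x} := by
  have hsub : {y | ∃ x, y = f x} ⊆ range fun z : range c => f z.2.choose := by
    rintro _ ⟨x, rfl⟩
    exact ⟨⟨c x, x, rfl⟩, h (⟨c x, x, rfl⟩ : range c).2.choose_spec⟩
  exact ((countable_range _).mono hsub).to_subtype

lemma exists_perm_fixing_compl_of_mk_fiber_eq {α β : Type*} {W : Set α} {f g : α → β}
    (hfg : ∀ x ∉ W, f x = g x) (hfib : ∀ b, #{x : W // f x = b} = #{x : W // g x = b}) :
    ∃ σ : Equiv.Perm α, (∀ x ∉ W, σ x = x) ∧ ∀ x, g (σ x) = f x := by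
  classical
  let π : Equiv.Perm W := Equiv.ofFiberEquiv fun b => (Cardinal.eq.1 (hfib b)).some
  refine ⟨Equiv.Perm.ofSubtype π, fun x hx => Equiv.Perm.ofSubtype_apply_of_not_mem π hx,
    fun x => ?_⟩
  by_cases hx : x ∈ W
  · rw [Equiv.Perm.ofSubtype_apply_of_mem π hx]
    exact Equiv.ofFiberEquiv_map (f := fun y : W => f y) (g := fun y : W => g y) _ ⟨x, hx⟩
  · rw [Equiv.Perm.ofSubtype_apply_of_not_mem π hx, hfg x hx]

lemma mk_fiber_subtype_eq_aleph0 {α β : Type*} [Countable α] {f : α → β} {b : β} {W D : Set α}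
    (hDW : D ⊆ W) (hD : D.Infinite) (hfD : ∀ x ∈ D, f x = b) : #{x : W // f x = b} = ℵ₀ := by
  have := hD.to_subtype
  have : Infinite {x : W // f x = b} :=
    Infinite.of_injective (fun d : D => ⟨⟨d, hDW d.2⟩, hfD d d.2⟩)
      fun d e hde => Subtype.ext (congrArg (fun y => (y.1 : α)) hde)
  exact mk_eq_aleph0 _

lemma mk_fiber_subtype_eq_of_ne {α β : Type*} {f : α → β} {b b₀ : β} {W : Set α}
    (hW : {x | f x ≠ b₀} ⊆ W) (hb : b ≠ b₀) : #{x : W // f x = b} = #{x // f x = b} :=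
  mk_congr <| Equiv.subtypeSubtypeEquivSubtype (p := (· ∈ W)) fun {x} (hx : f x = b) =>
    hW (show f x ≠ b₀ by rwa [hx])

lemma nrmS_union_lt_top {S T : Set (ℕ × ℕ)} (hS : nrmS S < ⊤) (hT : nrmS T < ⊤) :
    nrmS (S ∪ T) < ⊤ :=
  (nrmS_union_le S T).trans_lt (ENNReal.add_lt_top.2 ⟨hS, hT⟩)

lemma nrmS_iUnion_lt_top {ι : Type*} [Finite ι] {S : ι → Set (ℕ × ℕ)}
    (hS : ∀ i, nrmS (S i) < ⊤) : nrmS (⋃ i, S i) < ⊤ := by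
  classical
  have := Fintype.ofFinite ι
  suffices ∀ t : Finset ι, nrmS (⋃ i ∈ t, S i) < ⊤ by simpa using this Finset.univ
  intro t
  induction t using Finset.induction_on with
  | empty => simp [nrmS_empty]
  | insert i t _ ih =>
    rw [Finset.set_biUnion_insert]
    exact nrmS_union_lt_top (hS i) ih

lemma nrmS_row_finite {S : Set (ℕ × ℕ)} (hS : nrmS S < ⊤) (i : ℕ) : {j | (i, j) ∈ S}.Finite := by
  have hwt : wt (i, 0) ≠ 0 := by simp [wt]
  refine ((ENNReal.finite_const_le_of_tsum_ne_top hS.ne hwt).preimage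
    (Prod.mk_right_injective i).injOn).subset fun j hj => ?_
  change wt (i, 0) ≤ S.indicator wt (i, j)
  rw [indicator_of_mem (show (i, j) ∈ S from hj)]
  rfl

lemma nrmS_range_lt_top (f : ℕ → ℕ) : nrmS (range fun i => (i, f i)) < ⊤ := by
  have hinj : Injective fun i => (i, f i) := fun a b hab => congrArg Prod.fst hab
  rw [nrmS, ← tsum_subtype, ← (Equiv.ofInjective _ hinj).tsum_eq]
  have hwt (i : ℕ) : wt (Equiv.ofInjective _ hinj i) = 2 * (3 : ℝ≥0∞)⁻¹ ^ (i + 1) := by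
    simp [wt, ENNReal.inv_pow]
  rw [tsum_congr hwt, ENNReal.tsum_mul_left, ENNReal.tsum_geometric_add_one]
  refine ENNReal.mul_lt_top (by norm_num) (ENNReal.mul_lt_top (by simp) ?_)
  simp [ENNReal.inv_lt_top, ENNReal.inv_lt_one]

lemma exists_infinite_disjoint_nrmS_lt_top {S : Set (ℕ × ℕ)} (hS : nrmS S < ⊤) :
    ∃ D, D.Infinite ∧ Disjoint D S ∧ nrmS D < ⊤ := by
  choose f hf using fun i => (nrmS_row_finite hS i).infinite_compl.nonempty
  refine ⟨range fun i => (i, f i), infinite_range_of_injective fun a b h => congrArg Prod.fst h,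
    disjoint_left.2 ?_, nrmS_range_lt_top f⟩
  rintro _ ⟨i, rfl⟩
  exact hf i

noncomputable instance : MulAction ↥Ggrp ↥Hgrp where
  smul := actGH
  one_smul _ := rfl
  mul_smul _ _ _ := rfl

lemma mem_Ggrp_of_forall_notMem {g : Equiv.Perm (ℕ × ℕ)} {W : Set (ℕ × ℕ)} (hW : nrmS W < ⊤)
    (hg : ∀ p ∉ W, g p = p) : g ∈ Ggrp :=
  (nrmS_mono fun p (hp : g p ≠ p) => of_not_not fun h => hp (hg p h)).trans_lt hW

lemma setOf_fixing_smul_eq_orbit_fixingSubgroup {G X : Type*} [Group G] [MulAction G X]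
    (A : Set X) (v : X) :
    {w | ∃ g : G, (∀ a ∈ A, g • a = a) ∧ g • v = w} = MulAction.orbit (fixingSubgroup G A) v := by
  ext w
  simp [MulAction.mem_orbit_iff, mem_fixingSubgroup_iff, Subgroup.smul_def]

section Pattern

variable {ι : Type*}

def pattern (v : ι → ↥Hgrp) (p : ℕ × ℕ) : ι → ZMod 2 := fun i => (v i : ℕ × ℕ → ZMod 2) p

noncomputable def patternCount (v : ι → ↥Hgrp) (s : ι → ZMod 2) : ℕ∞ :=
  ENat.card {p // pattern v p = s}

lemma nrmS_pattern_ne_zero_lt_top [Finite ι] (v : ι → ↥Hgrp) :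
    nrmS {p | pattern v p ≠ 0} < ⊤ := by
  refine (nrmS_mono fun p hp => ?_).trans_lt (nrmS_iUnion_lt_top fun i => (v i).2)
  obtain ⟨i, hi⟩ := Function.ne_iff.1 hp
  exact mem_iUnion.2 ⟨i, Fin.eq_one_of_ne_zero _ hi⟩

theorem exists_smul_eq_of_patternCount_eq [Finite ι] {v w : ι → ↥Hgrp}
    (h : patternCount v = patternCount w) : ∃ g : ↥Ggrp, g • v = w := by
  set U := {p | pattern v p ≠ 0} ∪ {p | pattern w p ≠ 0}
  have hU : nrmS U < ⊤ :=
    nrmS_union_lt_top (nrmS_pattern_ne_zero_lt_top v) (nrmS_pattern_ne_zero_lt_top w)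
  have hv0 (p) (hp : p ∉ U) : pattern v p = 0 := of_not_not fun h => hp (Or.inl h)
  have hw0 (p) (hp : p ∉ U) : pattern w p = 0 := of_not_not fun h => hp (Or.inr h)
  obtain ⟨D, hD, hDU, hDnrm⟩ := exists_infinite_disjoint_nrmS_lt_top hU
  have hfib (s : ι → ZMod 2) :
      #{x : ↥(U ∪ D) // pattern v x = s} = #{x : ↥(U ∪ D) // pattern w x = s} := by
    by_cases hs : s = 0
    · subst hs
      rw [mk_fiber_subtype_eq_aleph0 subset_union_right hD
          fun p hp => hv0 p (disjoint_left.1 hDU hp),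
        mk_fiber_subtype_eq_aleph0 subset_union_right hD
          fun p hp => hw0 p (disjoint_left.1 hDU hp)]
    · rw [mk_fiber_subtype_eq_of_ne (W := U ∪ D) (fun p hp => Or.inl (Or.inl hp)) hs,
        mk_fiber_subtype_eq_of_ne (W := U ∪ D) (fun p hp => Or.inl (Or.inr hp)) hs]
      exact (toENat_eq_iff_of_le_aleph0 mk_le_aleph0 mk_le_aleph0).1 (congrFun h s)
  obtain ⟨σ, hσW, hσ⟩ := exists_perm_fixing_compl_of_mk_fiber_eq
    (fun p hp => (hv0 p (hp ∘ Or.inl)).trans (hw0 p (hp ∘ Or.inl)).symm) hfib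
  refine ⟨⟨σ, mem_Ggrp_of_forall_notMem (nrmS_union_lt_top hU hDnrm) hσW⟩,
    funext fun i => Subtype.ext (funext fun p => ?_)⟩
  have := congrFun (hσ (σ⁻¹ p)) i
  rw [show σ (σ⁻¹ p) = p from σ.apply_symm_apply p] at this
  exact this.symm

end Pattern

/-- The pair `(H,G)`, with `G` acting on `H` by `g • h = h ∘ g⁻¹`, is
small: for every `n < ω` there are only countably many orbits on `Hⁿ` under the diagonal
action of `G`; equivalently, for every finite subset `A ⊆ H` there are only countably many
orbits on `H` under the pointwise stabilizer `G_A`. -/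
theorem statement15 :
    (∀ n : ℕ,
      Countable {o : Set (Fin n → ↥Hgrp) | ∃ v : Fin n → ↥Hgrp,
        o = {w | ∃ g : ↥Ggrp, (fun i => actGH g (v i)) = w}}) ∧
    (∀ A : Finset ↥Hgrp,
      Countable {o : Set ↥Hgrp | ∃ v : ↥Hgrp,
        o = {w | ∃ g : ↥Ggrp, (∀ a ∈ A, actGH g a = a) ∧ actGH g v = w}}) := by
  refine ⟨fun n => countable_setOf_exists_eq_of_factorsThrough (c := patternCount) ?_,
    fun A => countable_setOf_exists_eq_of_factorsThrough
      (c := fun v => patternCount fun o : Option A => o.elim v Subtype.val) ?_⟩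
  · intro v w hvw
    obtain ⟨g, rfl⟩ := exists_smul_eq_of_patternCount_eq hvw
    exact (MulAction.orbit_smul g v).symm
  · intro v w hvw
    obtain ⟨g, hg⟩ := exists_smul_eq_of_patternCount_eq hvw
    have hgA : g ∈ fixingSubgroup ↥Ggrp (A : Set ↥Hgrp) :=
      (mem_fixingSubgroup_iff _).2 fun a ha => congrFun hg (some ⟨a, ha⟩)
    have hgv : g • v = w := congrFun hg none
    have horbit (u : ↥Hgrp) : {w' | ∃ g : ↥Ggrp, (∀ a ∈ A, actGH g a = a) ∧ actGH g u = w'} =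
        MulAction.orbit (fixingSubgroup ↥Ggrp (A : Set ↥Hgrp)) u :=
      setOf_fixing_smul_eq_orbit_fixingSubgroup (A : Set ↥Hgrp) u
    dsimp only
    rw [horbit, horbit, ← hgv]
    exact (MulAction.orbit_smul (⟨g, hgA⟩ : fixingSubgroup ↥Ggrp (A : Set ↥Hgrp)) v).symm
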